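/- arXiv:0903.2555 — 2 statements merged into one kernel-verified Lean document; each statement's English description precedes it below -/
import Mathlib

section
/- Let X, Y be subsets of the positive integers and n ≥ 1 an integer with n+1 ∉ X ∪ Y. Then for all k ≥ 0, A_{n+1,k}^{X,Y} = (k+1) · A_{n,k+1}^{X,Y} + (n+1−k) · A_{n,k}^{X,Y}. -/
/-- `cnt X n` is `|X ∩ [n]|` where `[n] = {1, ..., n}`. -/
noncomputable def cnt (X : Set ℕ) (n : ℕ) : ℕ := (X ∩ Set.Icc 1 n).ncard

/-- `adj_{X,Y}(σ)`: number of `i` with `σ_i ∈ X` and `σ_{i+1} ∈ Y`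
(positions and values of `Fin n` are identified with `{1, ..., n}` via `i ↦ i + 1`). -/
noncomputable def adjCount (X Y : Set ℕ) (n : ℕ) (σ : Equiv.Perm (Fin n)) : ℕ :=
  {i : Fin n | ∃ h : (i : ℕ) + 1 < n,
    ((σ i : ℕ) + 1) ∈ X ∧ ((σ ⟨(i : ℕ) + 1, h⟩ : ℕ) + 1) ∈ Y}.ncard

/-- `A_{n,s}^{X,Y}`: the number of permutations of `[n]` with exactly `s`
`(X,Y)`-adjacencies. -/
noncomputable def A (X Y : Set ℕ) (n s : ℕ) : ℕ :=
  Nat.card {σ : Equiv.Perm (Fin n) | adjCount X Y n σ = s}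

/-!
Every permutation of `[n+1]` arises exactly once by inserting the value `n+1` into one of the
`n+1` gaps of a permutation `τ` of `[n]`. As `n+1 ∉ X ∪ Y`, the insertion creates no
`(X,Y)`-adjacency, and it destroys one exactly when the gap chosen lies inside an adjacency of `τ`.
Hence if `τ` has `a` adjacencies, the new permutation has `k` of them for `k+1` choices of the gap
when `a = k+1`, for the other `n+1-k` gaps when `a = k`, and for none otherwise.
-/

open Finset

lemma Fin.val_succAbove_eq_val_succAbove_add_one_iff {n : ℕ} (p : Fin (n + 1)) (j j' : Fin n) :
    (p.succAbove j' : ℕ) = p.succAbove j + 1 ↔ (j' : ℕ) = j + 1 ∧ j.succ ≠ p := by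
  simp only [ne_eq, Fin.ext_iff, Fin.succAbove, Fin.lt_def, Fin.val_castSucc, Fin.val_succ,
    apply_ite Fin.val]
  split_ifs <;> omega

lemma Finset.card_filter_card_erase_eq {α : Type*} [Fintype α] [DecidableEq α] (T : Finset α)
    (k : ℕ) :
    (#{p | #(T.erase p) = k} : ℤ) =
      (if #T = k + 1 then (k + 1 : ℤ) else 0) +
        (if #T = k then (Fintype.card α : ℤ) - k else 0) := by
  have hcard (p : α) : #(T.erase p) = k ↔ (p ∈ T ∧ #T = k + 1) ∨ (p ∉ T ∧ #T = k) := by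
    by_cases hp : p ∈ T
    · have := card_pos.2 ⟨p, hp⟩
      simp only [card_erase_of_mem hp, hp, true_and, not_true_eq_false, false_and, or_false]
      omega
    · simp [hp]
  simp only [hcard]
  by_cases h₁ : #T = k + 1
  · rw [filter_congr (q := (· ∈ T)) (by simp [h₁]), filter_mem_eq_inter, univ_inter]
    simp [h₁]
  · by_cases h₀ : #T = k
    · rw [filter_congr (q := (· ∉ T)) (by simp [h₀]), filter_not, filter_mem_eq_inter,
        univ_inter, ← compl_eq_univ_sdiff, card_compl, Nat.cast_sub (card_le_univ T)]
      simp [h₀]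
    · simp [h₁, h₀]

section Adjacencies

variable (X Y : Set ℕ) {m : ℕ}

open scoped Classical in
noncomputable def adjPositions (σ : Equiv.Perm (Fin m)) : Finset (Fin m) :=
  {i | ∃ i' : Fin m, (i' : ℕ) = i + 1 ∧ (σ i : ℕ) + 1 ∈ X ∧ (σ i' : ℕ) + 1 ∈ Y}

lemma adjCount_eq_card_adjPositions (σ : Equiv.Perm (Fin m)) :
    adjCount X Y m σ = #(adjPositions X Y σ) := by
  rw [adjCount, ← Set.ncard_coe_finset]
  congr 1
  ext i
  simp only [Set.mem_ofPred_eq, coe_filter, mem_univ, true_and, adjPositions]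
  constructor
  · rintro ⟨h, hx, hy⟩
    exact ⟨⟨i + 1, h⟩, rfl, hx, hy⟩
  · rintro ⟨i', hi', hx, hy⟩
    exact ⟨hi' ▸ i'.isLt, hx, by simpa only [← hi'] using hy⟩

lemma A_eq_card_filter (s : ℕ) :
    A X Y m s = #{σ : Equiv.Perm (Fin m) | #(adjPositions X Y σ) = s} := by
  simp [A, adjCount_eq_card_adjPositions, ← Fintype.card_subtype]

end Adjacencies

section Insertion

variable {n : ℕ}

def insertMax (τ : Equiv.Perm (Fin n)) (p : Fin (n + 1)) : Equiv.Perm (Fin (n + 1)) :=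
  ((finSuccEquiv' p).trans τ.optionCongr).trans (finSuccEquiv' (Fin.last n)).symm

@[simp]
lemma insertMax_apply_self (τ : Equiv.Perm (Fin n)) (p : Fin (n + 1)) :
    insertMax τ p p = Fin.last n := by
  simp [insertMax]

@[simp]
lemma insertMax_apply_succAbove (τ : Equiv.Perm (Fin n)) (p : Fin (n + 1)) (j : Fin n) :
    insertMax τ p (p.succAbove j) = (τ j).castSucc := by
  simp [insertMax]

lemma insertMax_bijective :
    Function.Bijective fun q : Equiv.Perm (Fin n) × Fin (n + 1) => insertMax q.1 q.2 := by
  rw [Fintype.bijective_iff_injective_and_card]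
  refine ⟨fun ⟨τ, p⟩ ⟨τ', p'⟩ h => ?_, by simp [Fintype.card_perm, Nat.factorial_succ, mul_comm]⟩
  simp only at h
  obtain rfl : p = p' := (insertMax τ' p').injective <| by
    rw [insertMax_apply_self, ← h, insertMax_apply_self]
  obtain rfl : τ = τ' := Equiv.ext fun j => Fin.castSucc_injective _ <| by
    rw [← insertMax_apply_succAbove, ← insertMax_apply_succAbove, h]
  rfl

end Insertion

section Recurrence

variable {X Y : Set ℕ} {n : ℕ}

lemma adjPositions_insertMax (h : n + 1 ∉ X ∪ Y) (τ : Equiv.Perm (Fin n)) (p : Fin (n + 1)) :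
    adjPositions X Y (insertMax τ p) =
      {j ∈ adjPositions X Y τ | j.succ ≠ p}.map p.succAboveEmb := by
  simp only [Set.mem_union, not_or] at h
  ext i
  simp only [adjPositions, mem_map, mem_filter, mem_univ, true_and, Fin.coe_succAboveEmb]
  constructor
  · rintro ⟨i', hi', hx, hy⟩
    obtain ⟨j, rfl⟩ := Fin.exists_succAbove_eq (x := i) (y := p) (by rintro rfl; simp_all)
    obtain ⟨j', rfl⟩ := Fin.exists_succAbove_eq (x := i') (y := p) (by rintro rfl; simp_all)
    obtain ⟨hj', hjp⟩ := (Fin.val_succAbove_eq_val_succAbove_add_one_iff p j j').1 hi'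
    simp only [insertMax_apply_succAbove, Fin.val_castSucc] at hx hy
    exact ⟨j, ⟨⟨j', hj', hx, hy⟩, hjp⟩, rfl⟩
  · rintro ⟨j, ⟨⟨j', hj', hx, hy⟩, hjp⟩, rfl⟩
    refine ⟨p.succAbove j', (Fin.val_succAbove_eq_val_succAbove_add_one_iff p j j').2 ⟨hj', hjp⟩,
      ?_, ?_⟩ <;> simpa only [insertMax_apply_succAbove, Fin.val_castSucc]

lemma card_adjPositions_insertMax (h : n + 1 ∉ X ∪ Y) (τ : Equiv.Perm (Fin n))
    (p : Fin (n + 1)) :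
    #(adjPositions X Y (insertMax τ p)) =
      #(((adjPositions X Y τ).map (Fin.succEmb n)).erase p) := by
  rw [adjPositions_insertMax h, card_map, ← filter_ne', filter_map, card_map]
  rfl

lemma A_succ_eq_sum (h : n + 1 ∉ X ∪ Y) (k : ℕ) :
    A X Y (n + 1) k =
      ∑ τ : Equiv.Perm (Fin n),
        #{p | #(((adjPositions X Y τ).map (Fin.succEmb n)).erase p) = k} := by
  rw [A_eq_card_filter, ← card_equiv (Equiv.ofBijective _ insertMax_bijective)
    (s := {q | #(adjPositions X Y (insertMax q.1 q.2)) = k}) (by simp)]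
  simp only [card_filter, Fintype.sum_prod_type, card_adjPositions_insertMax h]

end Recurrence

theorem A_rec_case1_general (X Y : Set ℕ) (n : ℕ)
    (h : n + 1 ∉ X ∪ Y) (k : ℕ) :
    (A X Y (n + 1) k : ℤ) =
      ((k : ℤ) + 1) * (A X Y n (k + 1) : ℤ) +
        ((n : ℤ) + 1 - (k : ℤ)) * (A X Y n k : ℤ) := by
  rw [A_succ_eq_sum h, A_eq_card_filter, A_eq_card_filter]
  push_cast
  simp only [card_filter_card_erase_eq, card_map, Fintype.card_fin, sum_add_distrib,
    ← sum_filter, sum_const, nsmul_eq_mul, Nat.cast_add, Nat.cast_one]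
  ring

/-- Recurrence for `A_{n,k}^{X,Y}` when `n+1 ∉ X ∪ Y`:
`A_{n+1,k} = (k+1) A_{n,k+1} + (n+1-k) A_{n,k}`. -/
theorem A_rec_case1 (X Y : Set ℕ) (hX : 0 ∉ X) (hY : 0 ∉ Y) (n : ℕ) (hn : 1 ≤ n)
    (h : n + 1 ∉ X ∪ Y) (k : ℕ) :
    (A X Y (n + 1) k : ℤ) =
      ((k : ℤ) + 1) * (A X Y n (k + 1) : ℤ) +
        ((n : ℤ) + 1 - (k : ℤ)) * (A X Y n k : ℤ) :=
  A_rec_case1_general X Y n h k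
end

section
/- Let X, Y be subsets of the positive integers and n ≥ 1 an integer with n+1 ∈ Y − X. Then for all k ≥ 0, V_{n+1,k}^{X,Y} = (x_n − (k−1)) · V_{n,k−1}^{X,Y} + (n+1 − (x_n − k)) · V_{n,k}^{X,Y}, where the term with V_{n,k−1}^{X,Y} is omitted when k = 0. -/
/-- `val_{X,Y}(σ)`: number of positions `i ∈ [n]` with `i ∈ X` and `σ_i ∈ Y`
(positions and values of `Fin n` are identified with `{1, ..., n}` via `i ↦ i + 1`). -/
noncomputable def valCount (X Y : Set ℕ) (n : ℕ) (σ : Equiv.Perm (Fin n)) : ℕ :=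
  {i : Fin n | ((i : ℕ) + 1) ∈ X ∧ (((σ i : ℕ)) + 1) ∈ Y}.ncard

/-- `V_{n,k}^{X,Y}`: the number of permutations of `[n]` with exactly `k`
`(X,Y)`-place-value pairs. -/
noncomputable def V (X Y : Set ℕ) (n k : ℕ) : ℕ :=
  Nat.card {σ : Equiv.Perm (Fin n) | valCount X Y n σ = k}

/-!
Every permutation of `[n + 1]` arises exactly once as `τ ∘ (i, n + 1)`, where `τ` is a permutation
of `[n]` extended by fixing `n + 1`, and `i ∈ [n + 1]`: the value `n + 1` is placed at position `i` and
`τ_i` moves to the end. As `n + 1 ∉ X`, the last position never counts; as `n + 1 ∈ Y`, the swap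
creates a new pair exactly when `i ∈ X` and `τ_i ∉ Y`, and there are `x_n - val(τ)` such `i`.
Hence each `τ` with `val(τ) = k - 1` yields `x_n - (k - 1)` permutations with `val = k`, and each
`τ` with `val(τ) = k` yields the remaining `n + 1 - (x_n - k)`.
-/

open Finset Equiv

open scoped Classical

lemma valCount_eq_card (X Y : Set ℕ) (m : ℕ) (σ : Perm (Fin m)) :
    valCount X Y m σ = #{i : Fin m | (i : ℕ) + 1 ∈ X ∧ (σ i : ℕ) + 1 ∈ Y} := by
  rw [valCount, Set.ncard_eq_toFinset_card']
  simp [Set.toFinset_ofPred]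

lemma cnt_eq_card (X : Set ℕ) (m : ℕ) : cnt X m = #{i : Fin m | (i : ℕ) + 1 ∈ X} := by
  have hshift : X ∩ Set.Icc 1 m = (fun i : Fin m => (i : ℕ) + 1) '' {i | (i : ℕ) + 1 ∈ X} := by
    ext x
    constructor
    · rintro ⟨hx, h1, h2⟩
      exact ⟨⟨x - 1, by omega⟩, by simpa [Nat.sub_add_cancel h1] using hx, Nat.sub_add_cancel h1⟩
    · rintro ⟨i, hi, rfl⟩
      exact ⟨hi, Nat.le_add_left 1 i, i.isLt⟩
  rw [cnt, hshift, Set.ncard_image_of_injective _ (fun i j h => Fin.ext (by simpa using h)),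
    Set.ncard_eq_toFinset_card']
  simp [Set.toFinset_ofPred]

lemma V_eq_card (X Y : Set ℕ) (m k : ℕ) : V X Y m k = #{σ | valCount X Y m σ = k} := by
  rw [V, Nat.card_eq_fintype_card, Fintype.card_subtype]
  rfl

lemma valCount_add_card_defect (X Y : Set ℕ) (m : ℕ) (σ : Perm (Fin m)) :
    valCount X Y m σ + #{i : Fin m | (i : ℕ) + 1 ∈ X ∧ (σ i : ℕ) + 1 ∉ Y} = cnt X m := by
  rw [valCount_eq_card, cnt_eq_card,
    ← card_filter_add_card_filter_not (s := {i : Fin m | (i : ℕ) + 1 ∈ X})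
      (fun i => (σ i : ℕ) + 1 ∈ Y), filter_filter, filter_filter]

lemma valCount_mul_swap (X Y : Set ℕ) {m : ℕ} (σ : Perm (Fin m)) {a b : Fin m}
    (hb : (b : ℕ) + 1 ∉ X) (hσb : (σ b : ℕ) + 1 ∈ Y) :
    valCount X Y m (σ * swap a b) =
      valCount X Y m σ + if (a : ℕ) + 1 ∈ X ∧ (σ a : ℕ) + 1 ∉ Y then 1 else 0 := by
  have hmem : ∀ i : Fin m, ((i : ℕ) + 1 ∈ X ∧ ((σ * swap a b) i : ℕ) + 1 ∈ Y) ↔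
      ((i : ℕ) + 1 ∈ X ∧ (σ i : ℕ) + 1 ∈ Y) ∨ (i = a ∧ (a : ℕ) + 1 ∈ X ∧ (σ a : ℕ) + 1 ∉ Y) := by
    intro i
    rcases eq_or_ne i a with rfl | hia
    · rcases eq_or_ne i b with rfl | hib
      · simp [hb]
      · by_cases hσa : (σ i : ℕ) + 1 ∈ Y <;> simp [hσb, hσa]
    rcases eq_or_ne i b with rfl | hib
    · simp [hb, hia]
    · simp [swap_apply_of_ne_of_ne hia hib, hia]
  rw [valCount_eq_card, valCount_eq_card]
  split_ifs with hd
  · rw [← card_insert_of_notMem (a := a)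
      (s := {i : Fin m | (i : ℕ) + 1 ∈ X ∧ (σ i : ℕ) + 1 ∈ Y}) (by simp [hd.2])]
    congr 1
    ext i
    simp only [mem_filter_univ, mem_insert, hmem]
    tauto
  · rw [add_zero]
    congr 1
    ext i
    simp only [mem_filter_univ, hmem]
    tauto

lemma card_filter_add_ite_eq {α : Type*} [Fintype α] (p : α → Prop) [DecidablePred p] (v k : ℕ) :
    #{a | v + (if p a then 1 else 0) = k} =
      (if v = k then #{a | ¬p a} else 0) + (if v + 1 = k then #{a | p a} else 0) := by
  split_ifs with h1 h2 h2
  · omega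
  · rw [add_zero]
    congr 1
    ext a
    by_cases ha : p a <;> simp [ha, h1]
  · rw [zero_add]
    congr 1
    ext a
    by_cases ha : p a <;> simp [ha, ← h2]
  · rw [add_zero, card_eq_zero, filter_eq_empty_iff]
    intro a _
    split_ifs <;> omega

lemma card_valCount_mul_swap_eq (X Y : Set ℕ) {m : ℕ} (σ : Perm (Fin m)) {b : Fin m}
    (hb : (b : ℕ) + 1 ∉ X) (hσb : (σ b : ℕ) + 1 ∈ Y) (k : ℕ) :
    (#{a | valCount X Y m (σ * swap a b) = k} : ℤ) =
      (if valCount X Y m σ = k then (m : ℤ) - ((cnt X m : ℤ) - k) else 0) +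
        (if valCount X Y m σ + 1 = k then (cnt X m : ℤ) - ((k : ℤ) - 1) else 0) := by
  have hcnt := valCount_add_card_defect X Y m σ
  have hsplit := card_filter_add_card_filter_not (s := univ)
    (fun a : Fin m => (a : ℕ) + 1 ∈ X ∧ (σ a : ℕ) + 1 ∉ Y)
  rw [card_univ, Fintype.card_fin] at hsplit
  simp_rw [valCount_mul_swap X Y σ hb hσb]
  rw [card_filter_add_ite_eq]
  split_ifs <;> push_cast <;> omega

lemma card_filter_univ_castSucc {n : ℕ} (p : Fin (n + 1) → Prop) [DecidablePred p]
    (hlast : ¬p (Fin.last n)) : #{i | p i} = #{i : Fin n | p i.castSucc} := by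
  rw [card_filter, card_filter, Fin.sum_univ_castSucc, if_neg hlast, add_zero]

lemma cnt_succ_of_notMem (X : Set ℕ) {n : ℕ} (hX : n + 1 ∉ X) : cnt X (n + 1) = cnt X n := by
  rw [cnt_eq_card, cnt_eq_card, card_filter_univ_castSucc _ (by simpa using hX)]
  rfl

lemma viaEmbedding_castSuccEmb_last {n : ℕ} (τ : Perm (Fin n)) :
    τ.viaEmbedding Fin.castSuccEmb (Fin.last n) = Fin.last n :=
  τ.viaEmbedding_apply_of_notMem _ _ (by simp [Fin.range_castSucc])

lemma viaEmbedding_castSuccEmb_castSucc {n : ℕ} (τ : Perm (Fin n)) (i : Fin n) :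
    τ.viaEmbedding Fin.castSuccEmb i.castSucc = (τ i).castSucc :=
  τ.viaEmbedding_apply Fin.castSuccEmb i

lemma valCount_viaEmbedding_castSuccEmb (X Y : Set ℕ) {n : ℕ} (hX : n + 1 ∉ X)
    (τ : Perm (Fin n)) :
    valCount X Y (n + 1) (τ.viaEmbedding Fin.castSuccEmb) = valCount X Y n τ := by
  rw [valCount_eq_card, valCount_eq_card, card_filter_univ_castSucc _ (by simp [hX])]
  congr 1
  ext i
  simp [viaEmbedding_castSuccEmb_castSucc]

noncomputable def insertLast {n : ℕ} (τ : Perm (Fin n)) (i : Fin (n + 1)) : Perm (Fin (n + 1)) :=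
  τ.viaEmbedding Fin.castSuccEmb * swap i (Fin.last n)

lemma insertLast_apply_self {n : ℕ} (τ : Perm (Fin n)) (i : Fin (n + 1)) :
    insertLast τ i i = Fin.last n := by
  simp [insertLast, viaEmbedding_castSuccEmb_last]

lemma insertLast_bijective {n : ℕ} :
    Function.Bijective (Function.uncurry (insertLast (n := n))) := by
  rw [Fintype.bijective_iff_injective_and_card]
  refine ⟨?_, by simp [Fintype.card_perm, Nat.factorial_succ, mul_comm]⟩
  rintro ⟨τ, i⟩ ⟨τ', i'⟩ h
  simp only [Function.uncurry_apply_pair] at h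
  obtain rfl : i = i' := (insertLast τ' i').injective <| by
    rw [insertLast_apply_self, ← h, insertLast_apply_self]
  obtain rfl : τ = τ' := Perm.viaEmbeddingHom_injective Fin.castSuccEmb (mul_right_cancel h)
  rfl

lemma V_succ_eq_sum (X Y : Set ℕ) (n k : ℕ) :
    V X Y (n + 1) k = ∑ τ, #{i | valCount X Y (n + 1) (insertLast τ i) = k} := by
  rw [V_eq_card, card_filter, ← (Equiv.ofBijective _ insertLast_bijective).sum_comp,
    Fintype.sum_prod_type]
  simp_rw [card_filter]
  rfl

lemma sum_ite_valCount_eq (X Y : Set ℕ) (n k : ℕ) (c : ℤ) :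
    ∑ τ : Perm (Fin n), (if valCount X Y n τ = k then c else 0) = c * V X Y n k := by
  rw [← sum_filter, sum_const, V_eq_card, nsmul_eq_mul, mul_comm]

lemma card_valCount_insertLast_eq (X Y : Set ℕ) {n : ℕ} (hX : n + 1 ∉ X) (hY : n + 1 ∈ Y)
    (τ : Perm (Fin n)) (k : ℕ) :
    (#{i | valCount X Y (n + 1) (insertLast τ i) = k} : ℤ) =
      (if valCount X Y n τ = k then (n : ℤ) + 1 - ((cnt X n : ℤ) - k) else 0) +
        (if valCount X Y n τ + 1 = k then (cnt X n : ℤ) - ((k : ℤ) - 1) else 0) := by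
  have key := card_valCount_mul_swap_eq X Y (τ.viaEmbedding Fin.castSuccEmb) (b := Fin.last n)
    (by simpa using hX) (by simpa [viaEmbedding_castSuccEmb_last] using hY) k
  rw [valCount_viaEmbedding_castSuccEmb X Y hX, cnt_succ_of_notMem X hX] at key
  push_cast at key
  exact key

theorem V_rec_case4_general (X Y : Set ℕ) (n : ℕ)
    (h : n + 1 ∈ Y \ X) (k : ℕ) :
    (V X Y (n + 1) k : ℤ) =
      (if k = 0 then 0 else
        ((cnt X n : ℤ) - ((k : ℤ) - 1)) * (V X Y n (k - 1) : ℤ)) +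
        ((n : ℤ) + 1 - ((cnt X n : ℤ) - (k : ℤ))) * (V X Y n k : ℤ) := by
  rw [V_succ_eq_sum, Nat.cast_sum]
  simp_rw [card_valCount_insertLast_eq X Y h.2 h.1, sum_add_distrib, sum_ite_valCount_eq]
  rw [add_comm]
  congr 1
  cases k with
  | zero => simp
  | succ j => simp [sum_ite_valCount_eq]

/-- Recurrence for `V_{n,k}^{X,Y}` when `n+1 ∈ Y - X`:
`V_{n+1,k} = (x_n - (k-1)) V_{n,k-1} + (n+1 - (x_n - k)) V_{n,k}`,
the first term being omitted when `k = 0`. -/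
theorem V_rec_case4 (X Y : Set ℕ) (hX : 0 ∉ X) (hY : 0 ∉ Y) (n : ℕ) (hn : 1 ≤ n)
    (h : n + 1 ∈ Y \ X) (k : ℕ) :
    (V X Y (n + 1) k : ℤ) =
      (if k = 0 then 0 else
        ((cnt X n : ℤ) - ((k : ℤ) - 1)) * (V X Y n (k - 1) : ℤ)) +
        ((n : ℤ) + 1 - ((cnt X n : ℤ) - (k : ℤ))) * (V X Y n k : ℤ) :=
  V_rec_case4_general X Y n h k
end
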